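/- In the fixed-design linear-predictor setting of Theorem 2, suppose the data are i.i.d. in the sense that Σ = σ_ε² I_n for some σ_ε² ≥ 0 and Cov((y_tr)_j, y_te) = 0 for all j. Then, since H has zero diagonal, tr(H Σ) = σ_ε² tr(H) = 0, so the CV bias vanishes: w_cv = 0. In contrast, for any deterministic n×n matrix H and independent identically distributed square-integrable random vectors y, y* : Ω → ℝ^n with Cov(y_i, y_j) = σ_ε² δ_{ij}, the expected optimism w = E[(1/n)‖y* − H y‖²] − E[(1/n)‖y − H y‖²] equals (2 σ_ε²/n) tr(H), which is in general nonzero. (Paper's comparison of CV bias and expected optimism in the i.i.d. case.) -/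

import Mathlib

open MeasureTheory ProbabilityTheory

/-- Variance `E[(U - E U)^2]` of a real random variable. -/
noncomputable def eVar {Ω : Type*} [MeasurableSpace Ω] (μ : Measure Ω) (U : Ω → ℝ) : ℝ :=
  ∫ ω, (U ω - ∫ ω', U ω' ∂μ) ^ 2 ∂μ

/-- Covariance `E[(U - E U)(V - E V)]` of two real random variables. -/
noncomputable def eCov {Ω : Type*} [MeasurableSpace Ω] (μ : Measure Ω) (U V : Ω → ℝ) : ℝ :=
  ∫ ω, (U ω - ∫ ω', U ω' ∂μ) * (V ω - ∫ ω', V ω' ∂μ) ∂μ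

/-!
Everything reduces to `E (U - V)² = Var U - 2 Cov(U, V) + Var V + (E U - E V)²`.
For the leave-one-out residual `y k - (H y) k` with uncorrelated `y`, the covariance term is
`H k k Var(y k) = 0`, and for the test residual it vanishes because `yte` is uncorrelated with
`ytr`; the matching means and variances then make each training residual's mean square equal to
the test one. For an independent copy `ystar` of `y`, the covariance term of `ystar k - (H y) k`
vanishes while that of `y k - (H y) k` is `σ² H k k`; averaging over `k` gives the trace.
-/

namespace ProbabilityTheory

variable {Ω : Type*} [MeasurableSpace Ω] {μ : Measure Ω}

lemma eCov_eq_covariance (U V : Ω → ℝ) : eCov μ U V = cov[U, V; μ] := rfl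

lemma eVar_eq_variance {U : Ω → ℝ} (hU : AEMeasurable U μ) : eVar μ U = Var[U; μ] :=
  (variance_eq_integral hU).symm

section FiniteMeasure

variable [IsFiniteMeasure μ]

lemma covariance_fun_sum_const_mul_right {ι : Type*} [Fintype ι] {X : ι → Ω → ℝ} {Y : Ω → ℝ}
    (hX : ∀ i, MemLp (X i) 2 μ) (hY : MemLp Y 2 μ) (c : ι → ℝ) :
    cov[Y, fun ω ↦ ∑ i, c i * X i ω; μ] = ∑ i, c i * cov[Y, X i; μ] := by
  rw [covariance_fun_sum_right (fun i ↦ (hX i).const_mul (c i)) hY]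
  simp only [covariance_const_mul_right]

lemma covariance_fun_sum_const_mul_right_of_uncorrelated {ι : Type*} [Fintype ι]
    {X : ι → Ω → ℝ} (hX : ∀ i, MemLp (X i) 2 μ)
    (huncorr : ∀ i j, i ≠ j → cov[X i, X j; μ] = 0) (c : ι → ℝ) (k : ι) :
    cov[X k, fun ω ↦ ∑ j, c j * X j ω; μ] = c k * Var[X k; μ] := by
  rw [covariance_fun_sum_const_mul_right hX (hX k),
    Finset.sum_eq_single k (fun j _ hj ↦ by rw [huncorr k j (Ne.symm hj), mul_zero])
      (fun hk ↦ absurd (Finset.mem_univ k) hk),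
    covariance_self (hX k).aemeasurable]

end FiniteMeasure

variable [IsProbabilityMeasure μ]

lemma integral_sub_sq_eq {U V : Ω → ℝ} (hU : MemLp U 2 μ) (hV : MemLp V 2 μ) :
    ∫ ω, (U ω - V ω) ^ 2 ∂μ
      = Var[U; μ] - 2 * cov[U, V; μ] + Var[V; μ] + (μ[U] - μ[V]) ^ 2 := by
  have hdecomp := variance_eq_sub (hU.sub hV)
  rw [variance_sub hU hV, integral_sub' (hU.integrable one_le_two) (hV.integrable one_le_two)]
    at hdecomp
  have hsq : μ[(U - V) ^ 2] = ∫ ω, (U ω - V ω) ^ 2 ∂μ := rfl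
  linarith

lemma integral_sub_sq_sub_integral_sub_sq_of_indep_copy {U U' V : Ω → ℝ}
    (hU : MemLp U 2 μ) (hV : MemLp V 2 μ) (hident : IdentDistrib U' U μ μ)
    (hindep : IndepFun U' V μ) :
    ∫ ω, (U' ω - V ω) ^ 2 ∂μ - ∫ ω, (U ω - V ω) ^ 2 ∂μ = 2 * cov[U, V; μ] := by
  have hU' : MemLp U' 2 μ := hident.symm.memLp_snd hU
  rw [integral_sub_sq_eq hU' hV, integral_sub_sq_eq hU hV, hindep.covariance_eq_zero hU' hV,
    hident.variance_eq, hident.integral_eq]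
  ring

section LinearSmoother

variable {ι κ : Type*} [Fintype ι] [Fintype κ]

/-- The paper's `w_cv`, for the test prediction `∑ j, c j * ytr j` of `yte`. -/
noncomputable def cvBias (μ : Measure Ω) (y : ι → Ω → ℝ) (A : Matrix ι ι ℝ)
    (ytr : κ → Ω → ℝ) (yte : Ω → ℝ) (c : κ → ℝ) : ℝ :=
  (∫ ω, (yte ω - ∑ j, c j * ytr j ω) ^ 2 ∂μ)
    - (1 / (Fintype.card ι : ℝ)) * ∫ ω, ∑ k, (y k ω - ∑ j, A k j * y j ω) ^ 2 ∂μ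

/-- The paper's expected optimism `w`, with `ystar` playing the role of `y*`. -/
noncomputable def expectedOptimism (μ : Measure Ω) (y ystar : ι → Ω → ℝ)
    (A : Matrix ι ι ℝ) : ℝ :=
  (∫ ω, (1 / (Fintype.card ι : ℝ)) * ∑ k, (ystar k ω - ∑ j, A k j * y j ω) ^ 2 ∂μ)
    - ∫ ω, (1 / (Fintype.card ι : ℝ)) * ∑ k, (y k ω - ∑ j, A k j * y j ω) ^ 2 ∂μ

variable {y : ι → Ω → ℝ} (hy : ∀ i, MemLp (y i) 2 μ)
  (huncorr : ∀ i j, i ≠ j → cov[y i, y j; μ] = 0)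
include hy huncorr

lemma integral_sub_sq_eq_of_zero_diag {A : Matrix ι ι ℝ} (hA : ∀ k, A k k = 0)
    {ytr : κ → Ω → ℝ} (hytr : ∀ j, MemLp (ytr j) 2 μ) {yte : Ω → ℝ} (hyte : MemLp yte 2 μ)
    (c : κ → ℝ) (hc : ∀ j, cov[ytr j, yte; μ] = 0) (k : ι)
    (hmean : μ[y k] = μ[yte]) (hvar : Var[y k; μ] = Var[yte; μ])
    (hmeanA : μ[fun ω ↦ ∑ j, A k j * y j ω] = μ[fun ω ↦ ∑ j, c j * ytr j ω])
    (hvarA : Var[fun ω ↦ ∑ j, A k j * y j ω; μ] = Var[fun ω ↦ ∑ j, c j * ytr j ω; μ]) :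
    ∫ ω, (y k ω - ∑ j, A k j * y j ω) ^ 2 ∂μ = ∫ ω, (yte ω - ∑ j, c j * ytr j ω) ^ 2 ∂μ := by
  rw [integral_sub_sq_eq (hy k) (memLp_finsetSum _ fun j _ ↦ (hy j).const_mul (A k j)),
    integral_sub_sq_eq hyte (memLp_finsetSum _ fun j _ ↦ (hytr j).const_mul (c j)),
    covariance_fun_sum_const_mul_right_of_uncorrelated hy huncorr, hA k, zero_mul,
    covariance_fun_sum_const_mul_right hytr hyte, hmean, hvar, hmeanA, hvarA]
  simp only [covariance_comm yte, hc, mul_zero, Finset.sum_const_zero]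

lemma cvBias_eq_zero [Nonempty ι] {A : Matrix ι ι ℝ} (hA : ∀ k, A k k = 0)
    {ytr : κ → Ω → ℝ} (hytr : ∀ j, MemLp (ytr j) 2 μ) {yte : Ω → ℝ} (hyte : MemLp yte 2 μ)
    (c : κ → ℝ) (hc : ∀ j, cov[ytr j, yte; μ] = 0)
    (hmean : ∀ k, μ[y k] = μ[yte]) (hvar : ∀ k, Var[y k; μ] = Var[yte; μ])
    (hmeanA : ∀ k, μ[fun ω ↦ ∑ j, A k j * y j ω] = μ[fun ω ↦ ∑ j, c j * ytr j ω])
    (hvarA : ∀ k,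
      Var[fun ω ↦ ∑ j, A k j * y j ω; μ] = Var[fun ω ↦ ∑ j, c j * ytr j ω; μ]) :
    cvBias μ y A ytr yte c = 0 := by
  have hint : ∀ k ∈ Finset.univ, Integrable (fun ω ↦ (y k ω - ∑ j, A k j * y j ω) ^ 2) μ :=
    fun k _ ↦ ((hy k).sub (memLp_finsetSum _ fun j _ ↦ (hy j).const_mul (A k j))).integrable_sq
  rw [cvBias, integral_finsetSum _ hint]
  simp_rw [integral_sub_sq_eq_of_zero_diag hy huncorr hA hytr hyte c hc _ (hmean _) (hvar _)
    (hmeanA _) (hvarA _)]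
  rw [Finset.sum_const, Finset.card_univ, nsmul_eq_mul]
  field_simp
  ring

lemma expectedOptimism_eq {σ2 : ℝ} (hvar : ∀ i, Var[y i; μ] = σ2) {ystar : ι → Ω → ℝ}
    (hident : IdentDistrib (fun ω i ↦ ystar i ω) (fun ω i ↦ y i ω) μ μ)
    (hindep : IndepFun (fun ω i ↦ y i ω) (fun ω i ↦ ystar i ω) μ) (A : Matrix ι ι ℝ) :
    expectedOptimism μ y ystar A = (2 * σ2 / Fintype.card ι) * A.trace := by
  have hT : ∀ k, MemLp (fun ω ↦ ∑ j, A k j * y j ω) 2 μ :=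
    fun k ↦ memLp_finsetSum _ fun j _ ↦ (hy j).const_mul (A k j)
  have hident_k : ∀ k, IdentDistrib (ystar k) (y k) μ μ :=
    fun k ↦ hident.comp (measurable_pi_apply k)
  have hcoord : ∀ k, ∫ ω, (ystar k ω - ∑ j, A k j * y j ω) ^ 2 ∂μ
      - ∫ ω, (y k ω - ∑ j, A k j * y j ω) ^ 2 ∂μ = 2 * σ2 * A k k := by
    intro k
    have hAk : Measurable fun v : ι → ℝ ↦ ∑ j, A k j * v j := by fun_prop
    have hindep_k : IndepFun (ystar k) (fun ω ↦ ∑ j, A k j * y j ω) μ :=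
      (hindep.comp hAk (measurable_pi_apply k)).symm
    rw [integral_sub_sq_sub_integral_sub_sq_of_indep_copy (hy k) (hT k) (hident_k k) hindep_k,
      covariance_fun_sum_const_mul_right_of_uncorrelated hy huncorr, hvar k]
    ring
  have hint : ∀ (z : ι → Ω → ℝ), (∀ k, MemLp (z k) 2 μ) → ∀ k ∈ Finset.univ,
      Integrable (fun ω ↦ (z k ω - ∑ j, A k j * y j ω) ^ 2) μ :=
    fun z hz k _ ↦ ((hz k).sub (hT k)).integrable_sq
  rw [expectedOptimism, integral_const_mul, integral_const_mul,
    integral_finsetSum _ (hint ystar fun k ↦ (hident_k k).symm.memLp_snd (hy k)),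
    integral_finsetSum _ (hint y hy), ← mul_sub, ← Finset.sum_sub_distrib]
  simp_rw [hcoord]
  rw [← Finset.mul_sum, Matrix.trace]
  simp only [Matrix.diag]
  ring

end LinearSmoother

end ProbabilityTheory

theorem cv_bias_vs_expected_optimism_iid_general
    {Ω : Type*} [MeasurableSpace Ω] (μ : Measure Ω) [IsProbabilityMeasure μ]
    (n : ℕ) (hn : 0 < n) (σε2 : ℝ)
    (y : Fin n → Ω → ℝ) (hy : ∀ k, MemLp (y k) 2 μ)
    (H : Matrix (Fin n) (Fin n) ℝ) (hHdiag : ∀ k, H k k = 0)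
    (ytr : Fin (n - 1) → Ω → ℝ) (hytr : ∀ j, MemLp (ytr j) 2 μ)
    (yte : Ω → ℝ) (hyte : MemLp yte 2 μ)
    (hte : Fin (n - 1) → ℝ)
    (Sig : Matrix (Fin n) (Fin n) ℝ)
    (hSig : ∀ i j, Sig i j = eCov μ (y i) (y j))
    (hiid : Sig = σε2 • (1 : Matrix (Fin n) (Fin n) ℝ))
    (hmean : ∀ k, ∫ ω, y k ω ∂μ = ∫ ω, yte ω ∂μ)
    (hvar : ∀ k, eVar μ (y k) = eVar μ yte)
    (hmeanH : ∀ k, ∫ ω, (∑ j, H k j * y j ω) ∂μ = ∫ ω, (∑ j, hte j * ytr j ω) ∂μ)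
    (hvarH : ∀ k, eVar μ (fun ω => ∑ j, H k j * y j ω)
        = eVar μ (fun ω => ∑ j, hte j * ytr j ω))
    (hc : ∀ j, eCov μ (ytr j) yte = 0) :
    (Matrix.trace (H * Sig) = σε2 * Matrix.trace H) ∧
    (Matrix.trace (H * Sig) = 0) ∧
    ((∫ ω, (yte ω - ∑ j, hte j * ytr j ω) ^ 2 ∂μ)
        - (1 / (n : ℝ)) * ∫ ω, ∑ k, (y k ω - ∑ j, H k j * y j ω) ^ 2 ∂μ = 0) ∧
    (∀ (H' : Matrix (Fin n) (Fin n) ℝ) (ystar : Fin n → Ω → ℝ),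
      (∀ k, MemLp (ystar k) 2 μ) →
      Measurable (fun ω k => y k ω) →
      Measurable (fun ω k => ystar k ω) →
      IndepFun (fun ω k => y k ω) (fun ω k => ystar k ω) μ →
      μ.map (fun ω k => y k ω) = μ.map (fun ω k => ystar k ω) →
      (∫ ω, (1 / (n : ℝ)) * ∑ k, (ystar k ω - ∑ j, H' k j * y j ω) ^ 2 ∂μ)
          - ∫ ω, (1 / (n : ℝ)) * ∑ k, (y k ω - ∑ j, H' k j * y j ω) ^ 2 ∂μ
        = (2 * σε2 / (n : ℝ)) * Matrix.trace H') := by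
  have hcov : ∀ i j, cov[y i, y j; μ] = σε2 * (1 : Matrix (Fin n) (Fin n) ℝ) i j := fun i j ↦ by
    rw [← eCov_eq_covariance, ← hSig, hiid, Matrix.smul_apply, smul_eq_mul]
  have huncorr : ∀ i j, i ≠ j → cov[y i, y j; μ] = 0 := fun i j hij ↦ by
    rw [hcov, Matrix.one_apply_ne hij, mul_zero]
  have hvar_y : ∀ i, Var[y i; μ] = σε2 := fun i ↦ by
    rw [← covariance_self (hy i).aemeasurable, hcov, Matrix.one_apply_eq, mul_one]
  have hyae : ∀ j, AEMeasurable (y j) μ := fun j ↦ (hy j).aemeasurable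
  have hytrae : ∀ j, AEMeasurable (ytr j) μ := fun j ↦ (hytr j).aemeasurable
  have hyteae : AEMeasurable yte μ := hyte.aemeasurable
  simp (disch := fun_prop) only [eVar_eq_variance] at hvar hvarH
  have htrace : (H * Sig).trace = σε2 * H.trace := by
    rw [hiid, Matrix.mul_smul, Matrix.mul_one, Matrix.trace_smul, smul_eq_mul]
  have hHtrace : H.trace = 0 := Finset.sum_eq_zero fun k _ ↦ hHdiag k
  have : Nonempty (Fin n) := ⟨⟨0, hn⟩⟩
  refine ⟨htrace, by rw [htrace, hHtrace, mul_zero], ?_, ?_⟩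
  · simpa only [cvBias, Fintype.card_fin] using
      cvBias_eq_zero hy huncorr hHdiag hytr hyte hte hc hmean hvar hmeanH hvarH
  · intro H' ystar _ hmY hmYs hind hmap
    simpa only [expectedOptimism, Fintype.card_fin] using
      expectedOptimism_eq hy huncorr hvar_y ⟨hmYs.aemeasurable, hmY.aemeasurable, hmap.symm⟩ hind H'

/-- **Comparison of CV bias and expected optimism in the i.i.d. case.** In the fixed-design
linear-predictor setting of Theorem 2, if `Σ = σ_ε² I` and the test response is uncorrelated
with the training responses, then, since `H` has zero diagonal, `tr(H Σ) = σ_ε² tr(H) = 0`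
and the CV bias vanishes: `w_cv = 0`. In contrast, for any deterministic matrix `H'` and any
i.i.d. copy `y*` of `y`, the expected optimism equals `(2 σ_ε²/n) tr(H')`. -/
theorem cv_bias_vs_expected_optimism_iid
    {Ω : Type*} [MeasurableSpace Ω] (μ : Measure Ω) [IsProbabilityMeasure μ]
    (n : ℕ) (hn : 0 < n) (σε2 : ℝ) (hσ : 0 ≤ σε2)
    (y : Fin n → Ω → ℝ) (hy : ∀ k, MemLp (y k) 2 μ)
    (H : Matrix (Fin n) (Fin n) ℝ) (hHdiag : ∀ k, H k k = 0)
    (ytr : Fin (n - 1) → Ω → ℝ) (hytr : ∀ j, MemLp (ytr j) 2 μ)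
    (yte : Ω → ℝ) (hyte : MemLp yte 2 μ)
    (hte : Fin (n - 1) → ℝ)
    (Sig : Matrix (Fin n) (Fin n) ℝ)
    (hSig : ∀ i j, Sig i j = eCov μ (y i) (y j))
    (hiid : Sig = σε2 • (1 : Matrix (Fin n) (Fin n) ℝ))
    (hmean : ∀ k, ∫ ω, y k ω ∂μ = ∫ ω, yte ω ∂μ)
    (hvar : ∀ k, eVar μ (y k) = eVar μ yte)
    (hmeanH : ∀ k, ∫ ω, (∑ j, H k j * y j ω) ∂μ = ∫ ω, (∑ j, hte j * ytr j ω) ∂μ)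
    (hvarH : ∀ k, eVar μ (fun ω => ∑ j, H k j * y j ω)
        = eVar μ (fun ω => ∑ j, hte j * ytr j ω))
    (hc : ∀ j, eCov μ (ytr j) yte = 0) :
    (Matrix.trace (H * Sig) = σε2 * Matrix.trace H) ∧
    (Matrix.trace (H * Sig) = 0) ∧
    ((∫ ω, (yte ω - ∑ j, hte j * ytr j ω) ^ 2 ∂μ)
        - (1 / (n : ℝ)) * ∫ ω, ∑ k, (y k ω - ∑ j, H k j * y j ω) ^ 2 ∂μ = 0) ∧
    (∀ (H' : Matrix (Fin n) (Fin n) ℝ) (ystar : Fin n → Ω → ℝ),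
      (∀ k, MemLp (ystar k) 2 μ) →
      Measurable (fun ω k => y k ω) →
      Measurable (fun ω k => ystar k ω) →
      IndepFun (fun ω k => y k ω) (fun ω k => ystar k ω) μ →
      μ.map (fun ω k => y k ω) = μ.map (fun ω k => ystar k ω) →
      (∫ ω, (1 / (n : ℝ)) * ∑ k, (ystar k ω - ∑ j, H' k j * y j ω) ^ 2 ∂μ)
          - ∫ ω, (1 / (n : ℝ)) * ∑ k, (y k ω - ∑ j, H' k j * y j ω) ^ 2 ∂μ
        = (2 * σε2 / (n : ℝ)) * Matrix.trace H') :=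
  cv_bias_vs_expected_optimism_iid_general μ n hn σε2 y hy H hHdiag ytr hytr yte hyte hte Sig hSig
    hiid hmean hvar hmeanH hvarH hc
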